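/- Let α = 1/2 and let (y_k)_{0:N} be a real sequence. With Δ_+^{1/2} defined via the Grünwald–Letnikov coefficients, for every 1 ≤ k ≤ N-1 one has ∑_{n=0}^{N-k} α_n ∑_{p=0}^{N-k-n} α_p y_{k+n+p} = -(y_{k+1} - y_k), i.e., h Δ_+^{1/2} Δ_+^{1/2} y_k = -(y_{k+1} - y_k). -/

import Mathlib

open Finset

/-- Grünwald–Letnikov coefficients: `α_n = (-1)^n * binom(α, n)`,
i.e. `α_0 = 1`, `α_n = -α(1-α)(2-α)⋯(n-1-α)/n!` for `n ≥ 1`. -/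
noncomputable def glCoef (α : ℝ) (n : ℕ) : ℝ :=
  (-1 : ℝ) ^ n * (∏ i ∈ Finset.range n, (α - (i : ℝ))) / (n.factorial : ℝ)

/-- Retarded discrete fractional derivative `Δ_-^α z_k`. -/
noncomputable def dfracMinus (α h : ℝ) (z : ℕ → ℝ) (k : ℕ) : ℝ :=
  h ^ (-α) * ∑ n ∈ Finset.range (k + 1), glCoef α n * z (k - n)

/-- Advanced discrete fractional derivative `Δ_+^α z_k` (with horizon `N`). -/
noncomputable def dfracPlus (α h : ℝ) (N : ℕ) (z : ℕ → ℝ) (k : ℕ) : ℝ :=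
  h ^ (-α) * ∑ n ∈ Finset.range (N - k + 1), glCoef α n * z (k + n)

/-- Composed retarded operator `Δ_-^α Δ_-^α z_k`. -/
noncomputable def ddfracMinus (α h : ℝ) (z : ℕ → ℝ) (k : ℕ) : ℝ :=
  h ^ (-(2 * α)) * ∑ n ∈ Finset.range (k + 1), glCoef α n *
    ∑ p ∈ Finset.range (k - n + 1), glCoef α p * z (k - n - p)

/-- Composed advanced operator `Δ_+^α Δ_+^α z_k`. -/
noncomputable def ddfracPlus (α h : ℝ) (N : ℕ) (z : ℕ → ℝ) (k : ℕ) : ℝ :=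
  h ^ (-(2 * α)) * ∑ n ∈ Finset.range (N - k + 1), glCoef α n *
    ∑ p ∈ Finset.range (N - k - n + 1), glCoef α p * z (k + n + p)

/-!
The coefficients `glCoef α n = (-1)^n * binom(α, n)` are those of the power series `(1 - x)^α`,
so the Chu–Vandermonde identity turns their Cauchy product into `glCoef (α + β)`. Reindexing the
composed operator by `m = n + p` therefore gives the single operator of order `α + β`, and
for `α = β = 1/2` this is the operator with coefficients of `1 - x`, i.e. minus the forward
difference.
-/

@[simp]
lemma glCoef_zero (α : ℝ) : glCoef α 0 = 1 := by
  simp [glCoef]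

@[simp]
lemma glCoef_one (α : ℝ) : glCoef α 1 = -α := by
  simp [glCoef]

lemma glCoef_eq_neg_one_pow_mul_choose (α : ℝ) (n : ℕ) :
    glCoef α n = (-1) ^ n * Ring.choose α n := by
  rw [Ring.choose_eq_smul, ← Polynomial.aeval_eq_smeval, Polynomial.aeval_def,
    Polynomial.eval₂_eq_eval_map, descPochhammer_map, descPochhammer_eval_eq_prod_range,
    glCoef, smul_eq_mul]
  ring

theorem sum_antidiagonal_glCoef_mul_glCoef (α β : ℝ) (m : ℕ) :
    ∑ ij ∈ antidiagonal m, glCoef α ij.1 * glCoef β ij.2 = glCoef (α + β) m := by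
  rw [glCoef_eq_neg_one_pow_mul_choose, Ring.add_choose_eq m (Commute.all α β), mul_sum]
  refine sum_congr rfl fun ij hij => ?_
  rw [glCoef_eq_neg_one_pow_mul_choose, glCoef_eq_neg_one_pow_mul_choose,
    ← mem_antidiagonal.mp hij, pow_add]
  ring

lemma glCoef_one_of_two_le {n : ℕ} (hn : 2 ≤ n) : glCoef 1 n = 0 := by
  rw [glCoef, prod_eq_zero (i := 1) (mem_range.mpr hn) (by norm_num), mul_zero, zero_div]

lemma sum_range_sum_range_sub_eq_sum_antidiagonal {M : Type*} [AddCommMonoid M]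
    (f : ℕ → ℕ → M) (n : ℕ) :
    ∑ i ∈ range (n + 1), ∑ j ∈ range (n - i + 1), f i j
      = ∑ m ∈ range (n + 1), ∑ ij ∈ antidiagonal m, f ij.1 ij.2 := by
  rw [sum_sigma', sum_sigma']
  refine sum_nbij' (fun x => ⟨x.1 + x.2, (x.1, x.2)⟩) (fun x => ⟨x.2.1, x.2.2⟩)
    ?_ ?_ (fun _ _ => rfl) ?_ (fun _ _ => rfl)
  · rintro ⟨i, j⟩ h
    simp only [mem_sigma, mem_range, HasAntidiagonal.mem_antidiagonal, and_true] at h ⊢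
    omega
  all_goals
  · rintro ⟨m, i, j⟩ h
    simp only [mem_sigma, mem_range, HasAntidiagonal.mem_antidiagonal, Sigma.mk.injEq,
      heq_eq_eq, and_true] at h ⊢
    omega

theorem sum_glCoef_mul_sum_glCoef (α β : ℝ) (z : ℕ → ℝ) (k M : ℕ) :
    ∑ n ∈ range (M + 1), glCoef α n * ∑ p ∈ range (M - n + 1), glCoef β p * z (k + n + p)
      = ∑ m ∈ range (M + 1), glCoef (α + β) m * z (k + m) := by
  simp_rw [mul_sum, ← mul_assoc]
  rw [sum_range_sum_range_sub_eq_sum_antidiagonal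
    (fun n p => glCoef α n * glCoef β p * z (k + n + p))]
  refine sum_congr rfl fun m _ => ?_
  rw [← sum_antidiagonal_glCoef_mul_glCoef, sum_mul]
  refine sum_congr rfl fun ij hij => ?_
  rw [add_assoc, mem_antidiagonal.mp hij]

lemma sum_glCoef_one_mul {M : ℕ} (hM : 1 ≤ M) (z : ℕ → ℝ) (k : ℕ) :
    ∑ m ∈ range (M + 1), glCoef 1 m * z (k + m) = z k - z (k + 1) := by
  obtain ⟨L, rfl⟩ := Nat.exists_eq_add_of_le' hM
  rw [sum_range_succ', sum_range_succ',
    sum_eq_zero fun m _ => by rw [glCoef_one_of_two_le (by omega), zero_mul]]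
  simp only [zero_add, add_zero, glCoef_zero, glCoef_one]
  ring

/-- for `α = 1/2` and `1 ≤ k ≤ N-1`,
`∑_{n=0}^{N-k} α_n ∑_{p=0}^{N-k-n} α_p y_{k+n+p} = -(y_{k+1} - y_k)`,
i.e. `h Δ_+^{1/2} Δ_+^{1/2} y_k = -(y_{k+1} - y_k)`. -/
theorem glCoef_half_advanced_double_sum (N : ℕ) (y : ℕ → ℝ)
    (k : ℕ) (hk1 : 1 ≤ k) (hk2 : k ≤ N - 1) :
    (∑ n ∈ Finset.range (N - k + 1), glCoef (1 / 2) n *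
        ∑ p ∈ Finset.range (N - k - n + 1), glCoef (1 / 2) p * y (k + n + p)
      = -(y (k + 1) - y k)) ∧
    ∀ h : ℝ, 0 < h → h * ddfracPlus (1 / 2) h N y k = -(y (k + 1) - y k) := by
  have hsum : ∑ n ∈ range (N - k + 1), glCoef (1 / 2) n *
      ∑ p ∈ range (N - k - n + 1), glCoef (1 / 2) p * y (k + n + p) = -(y (k + 1) - y k) := by
    rw [sum_glCoef_mul_sum_glCoef, add_halves, sum_glCoef_one_mul (by omega), neg_sub]
  refine ⟨hsum, fun h hh => ?_⟩
  rw [ddfracPlus, hsum, ← mul_assoc, two_mul, add_halves, Real.rpow_neg_one,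
    mul_inv_cancel₀ hh.ne', one_mul]
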